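/- arXiv:0902.1259 — 5 statements merged into one kernel-verified Lean document; each statement's English description precedes it below -/
import Mathlib

section
/- Transposed frequency mining (CARPENTER property): for every natural number γ, the collection of closed itemsets with frequency greater than γ equals the image under f of the collection of closed object sets of cardinality greater than γ; that is, {A | (g A).ncard > γ ∧ f(g(A)) = A} = f '' {O | O.ncard > γ ∧ g(f(O)) = O}. -/
variable {A O : Type*}

/-- Intension: maps an object set to the set of attributes true of all its objects. -/
def fInt (r : A → O → Prop) (S : Set O) : Set A := {a | ∀ o ∈ S, r a o}

/-- Extension: maps an itemset to the set of objects having all its attributes. -/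
def gExt (r : A → O → Prop) (T : Set A) : Set O := {o | ∀ a ∈ T, r a o}

theorem transposed_frequency_mining [Fintype A] [Fintype O]
    (r : A → O → Prop) (γ : ℕ) :
    {T : Set A | (gExt r T).ncard > γ ∧ fInt r (gExt r T) = T} =
      fInt r '' {S : Set O | S.ncard > γ ∧ gExt r (fInt r S) = S} := by
  ext T
  constructor
  · rintro ⟨hcard, hclosed⟩
    exact ⟨gExt r T, ⟨by simpa using hcard, by rw [hclosed]⟩, hclosed⟩
  · rintro ⟨S, ⟨hcard, hS⟩, rfl⟩
    exact ⟨by rw [hS]; exact hcard, by rw [hS]⟩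
end

section
/- Transposition of the nonempty-intersection constraint (closed-complement case): let E be a constant itemset whose complement Eᶜ = 𝒜 \ E is closed (f(g(Eᶜ)) = Eᶜ). Then for every closed object set O (g(f(O)) = O), f(O) ∩ E ≠ ∅ if and only if ¬(g(Eᶜ) ⊆ O). -/
variable {A O : Type*}

theorem nonempty_intersection_closed_complement (r : A → O → Prop) (E : Set A) (S : Set O)
    (hE : fInt r (gExt r Eᶜ) = Eᶜ) (hS : gExt r (fInt r S) = S) :
    fInt r S ∩ E ≠ ∅ ↔ ¬ gExt r Eᶜ ⊆ S := by
  rw [Ne, ← Set.not_nonempty_iff_eq_empty]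
  apply not_congr
  constructor
  · intro h
    -- h : ¬ (fInt r S ∩ E).Nonempty, i.e. fInt r S ⊆ Eᶜ
    have hsub : fInt r S ⊆ Eᶜ := by
      intro a ha
      intro haE
      exact h ⟨a, ha, haE⟩
    -- gExt antitone
    intro o ho
    rw [← hS]
    intro a ha
    exact ho a (hsub ha)
  · intro h
    rintro ⟨a, haS, haE⟩
    -- fInt antitone: gExt Eᶜ ⊆ S → fInt S ⊆ fInt (gExt Eᶜ) = Eᶜ
    have : a ∈ fInt r (gExt r Eᶜ) := fun o ho => haS o (h ho)
    rw [hE] at this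
    exact this haE
end

section
/- The minimum frequency constraint is an optimal relaxation of itself: for every natural number γ, (i) for every itemset A, (g A).ncard > γ implies (g (f(g(A)))).ncard > γ, and (ii) {f(g(A)) | (g A).ncard > γ} = {A | (g A).ncard > γ ∧ f(g(A)) = A}. -/
variable {A O : Type*}

lemma gExt_fInt_gExt (r : A → O → Prop) (T : Set A) :
    gExt r (fInt r (gExt r T)) = gExt r T := by
  ext o
  constructor
  · intro h a ha
    exact h a (fun o' ho' => ho' a ha)
  · intro h a ha
    exact ha o h

theorem frequency_optimal_relaxation [Fintype A] [Fintype O]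
    (r : A → O → Prop) (γ : ℕ) :
    (∀ T : Set A, (gExt r T).ncard > γ → (gExt r (fInt r (gExt r T))).ncard > γ) ∧
    {X : Set A | ∃ T : Set A, (gExt r T).ncard > γ ∧ fInt r (gExt r T) = X} =
      {T : Set A | (gExt r T).ncard > γ ∧ fInt r (gExt r T) = T} := by
  constructor
  · intro T h
    rwa [gExt_fInt_gExt]
  · ext X
    constructor
    · rintro ⟨T, hT, rfl⟩
      refine ⟨by rwa [gExt_fInt_gExt], ?_⟩
      rw [gExt_fInt_gExt]
    · rintro ⟨h1, h2⟩
      exact ⟨X, h1, h2⟩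
end

section
/- Relaxation of a disjunction: if C'_1 is an optimal relaxation of C_1 and C'_2 is an optimal relaxation of C_2, then C'_1 ∨ C'_2 is an optimal relaxation of C_1 ∨ C_2; that is, for every itemset A, (C_1(A) ∨ C_2(A)) implies (C'_1 ∨ C'_2)(f(g(A))), and every closed itemset A satisfying C'_1(A) ∨ C'_2(A) equals f(g(B)) for some itemset B satisfying C_1(B) ∨ C_2(B). -/
variable {A O : Type*}

theorem disjunction_optimal_relaxation (r : A → O → Prop)
    (C₁ C₂ C₁' C₂' : Set A → Prop)
    (h₁ : ∀ T : Set A, C₁ T → C₁' (fInt r (gExt r T)))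
    (h₂ : ∀ T : Set A, C₂ T → C₂' (fInt r (gExt r T)))
    (h₁' : ∀ T : Set A, fInt r (gExt r T) = T → C₁' T →
      ∃ U : Set A, C₁ U ∧ fInt r (gExt r U) = T)
    (h₂' : ∀ T : Set A, fInt r (gExt r T) = T → C₂' T →
      ∃ U : Set A, C₂ U ∧ fInt r (gExt r U) = T) :
    (∀ T : Set A, C₁ T ∨ C₂ T → C₁' (fInt r (gExt r T)) ∨ C₂' (fInt r (gExt r T))) ∧
    (∀ T : Set A, fInt r (gExt r T) = T → C₁' T ∨ C₂' T →
      ∃ U : Set A, (C₁ U ∨ C₂ U) ∧ fInt r (gExt r U) = T) := by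
  constructor
  · rintro T (h | h)
    · exact Or.inl (h₁ T h)
    · exact Or.inr (h₂ T h)
  · rintro T hT (h | h)
    · obtain ⟨U, hU, hUe⟩ := h₁' T hT h
      exact ⟨U, Or.inl hU, hUe⟩
    · obtain ⟨U, hU, hUe⟩ := h₂' T hT h
      exact ⟨U, Or.inr hU, hUe⟩
end

section
/- Good relaxations of the subset and non-superset constraints: for every constant itemset E, (i) if A ⊆ E then f(g(A)) ⊆ f(g(E)) (so A ⊆ cl(E) is a good relaxation of A ⊆ E), and (ii) if ¬(E ⊆ A) then there exists e ∈ E with f(g(A)) ⊆ f(g({e}ᶜ)), where {e}ᶜ = 𝒜 \ {e} (so the disjunction over e ∈ E of A ⊆ cl({e}ᶜ) is a good relaxation of ¬(E ⊆ A)). -/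
variable {A O : Type*}

lemma clos_mono (r : A → O → Prop) {S T : Set A} (h : S ⊆ T) :
    fInt r (gExt r S) ⊆ fInt r (gExt r T) := by
  intro a ha o ho
  exact ha o (fun b hb => ho b (h hb))

theorem subset_and_nonsuperset_relaxations (r : A → O → Prop) (E T : Set A) :
    (T ⊆ E → fInt r (gExt r T) ⊆ fInt r (gExt r E)) ∧
    (¬ E ⊆ T → ∃ e ∈ E, fInt r (gExt r T) ⊆ fInt r (gExt r ({e}ᶜ))) := by
  refine ⟨fun h => clos_mono r h, fun h => ?_⟩
  obtain ⟨e, heE, heT⟩ := Set.not_subset.mp h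
  exact ⟨e, heE, clos_mono r fun a haT (hae : a ∈ ({e} : Set A)) => heT (hae ▸ haT)⟩
end
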